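/- Fix an integer C ≥ 1 and logit vectors a₀, b₀ ∈ ℝ^C. Let s = σ(a₀) and define the weights w_{j,k} = s_j · s_k. Define the decoupled loss G(a, b) = (1/4) · ∑_{j=1}^C ∑_{k=1}^C w_{j,k} · ((a_j − a_k) − (b₀_j − b₀_k))² − ∑_{j=1}^C s_j · log σ(b)_j (i.e., the DKL loss with α = β = 1 in which the weights, the second-argument differences in the weighted-MSE term, and the soft labels in the cross-entropy term are frozen at a₀, b₀). Then for every index i: (1) the partial derivative of a ↦ G(a, b₀) with respect to a_i, evaluated at a = a₀, equals the partial derivative of a ↦ KL(σ(a) ‖ σ(b₀)) with respect to a_i evaluated at a = a₀; and (2) the partial derivative of b ↦ G(a₀, b) with respect to b_i, evaluated at b = b₀, equals the partial derivative of b ↦ KL(σ(a₀) ‖ σ(b)) with respect to b_i evaluated at b = b₀. Hence the DKL loss with α = β = 1 produces exactly the same gradients as the KL loss at every point. -/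

import Mathlib

open Finset

/-- Softmax of a logit vector. -/
noncomputable def softmax {C : ℕ} (a : Fin C → ℝ) (i : Fin C) : ℝ :=
  Real.exp (a i) / ∑ j, Real.exp (a j)

/-- KL divergence loss between two vectors with positive entries. -/
noncomputable def klLoss {C : ℕ} (p q : Fin C → ℝ) : ℝ :=
  ∑ j, p j * Real.log (p j / q j)

/-- The decoupled KL (DKL) loss with α = β = 1, in which the weights `w`,
the second-argument differences in the wMSE term, and the soft labels in the
cross-entropy term are all frozen at the reference logits `a₀`, `b₀`. -/
noncomputable def dklLoss {C : ℕ} (a₀ b₀ : Fin C → ℝ) (a b : Fin C → ℝ) : ℝ :=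
  (1 / 4) * ∑ j, ∑ k, (softmax a₀ j * softmax a₀ k) *
      ((a j - a k) - (b₀ j - b₀ k)) ^ 2
    - ∑ j, softmax a₀ j * Real.log (softmax b j)

/-!
Both losses reduce to elementary functions of the log-partition function
`log ∑ exp`. Since `∑ σ(a₀) = 1`, the frozen weighted-MSE term is half the
`σ(a₀)`-variance of `a - b₀`, whose `a_i`-derivative at `a₀` is
`σ(a₀)_i ((a₀ - b₀)_i - E[a₀ - b₀])`, the `a_i`-derivative of `KL(σ(a) ‖ σ(b₀))`.
The frozen cross-entropy term is `-⟪σ(a₀), b⟫ + log ∑ exp b` up to a constant,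
with `b_i`-derivative `σ(b₀)_i - σ(a₀)_i`, which is also that of `KL(σ(a₀) ‖ σ(b))`.
-/

open Function

theorem hasDerivAt_sum_apply_update {ι : Type*} [Fintype ι] [DecidableEq ι] (g : ι → ℝ → ℝ) (a : ι → ℝ) (i : ι) {g' : ℝ}
    (hg : HasDerivAt (g i) g' (a i)) :
    HasDerivAt (fun t => ∑ j, g j (update a i t j)) g' (a i) := by
  have hsum : (fun t => ∑ j, g j (update a i t j)) =
      fun t => g i t + ∑ j ∈ univ \ {i}, g j (a j) := by
    funext t
    simp_rw [apply_update g a i t]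
    exact sum_update_of_mem (mem_univ i) _ _
  rw [hsum]
  exact hg.add_const _

theorem sum_mul_mul_sq_sub_sub {ι : Type*} [Fintype ι] (p a b : ι → ℝ) (hp : ∑ j, p j = 1) :
    ∑ j, ∑ k, (p j * p k) * ((a j - a k) - (b j - b k)) ^ 2 =
      2 * (∑ j, p j * (a j - b j) ^ 2 - (∑ j, p j * (a j - b j)) ^ 2) := by
  have hterm : ∀ j k, (p j * p k) * ((a j - a k) - (b j - b k)) ^ 2 =
      p k * (p j * (a j - b j) ^ 2) + p j * (p k * (a k - b k) ^ 2)
        - 2 * (p j * (a j - b j)) * (p k * (a k - b k)) := fun j k => by ring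
  simp only [hterm, sum_add_distrib, sum_sub_distrib, ← mul_sum, ← sum_mul, hp]
  ring

section Softmax

variable {C : ℕ}

theorem sum_exp_pos [Nonempty (Fin C)] (a : Fin C → ℝ) : 0 < ∑ j, Real.exp (a j) :=
  sum_pos (fun j _ => Real.exp_pos (a j)) univ_nonempty

theorem softmax_pos [Nonempty (Fin C)] (a : Fin C → ℝ) (j : Fin C) : 0 < softmax a j :=
  div_pos (Real.exp_pos _) (sum_exp_pos a)

theorem sum_softmax_mul (a f : Fin C → ℝ) :
    ∑ j, softmax a j * f j = (∑ j, Real.exp (a j) * f j) / ∑ j, Real.exp (a j) := by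
  simp only [softmax, sum_div, div_mul_eq_mul_div]

theorem sum_softmax [Nonempty (Fin C)] (a : Fin C → ℝ) : ∑ j, softmax a j = 1 := by
  simp only [softmax, ← sum_div]
  exact div_self (sum_exp_pos a).ne'

theorem log_softmax [Nonempty (Fin C)] (a : Fin C → ℝ) (j : Fin C) :
    Real.log (softmax a j) = a j - Real.log (∑ k, Real.exp (a k)) := by
  rw [softmax, Real.log_div (Real.exp_ne_zero _) (sum_exp_pos a).ne', Real.log_exp]

theorem sum_softmax_mul_log_softmax [Nonempty (Fin C)] (a b : Fin C → ℝ) :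
    ∑ j, softmax a j * Real.log (softmax b j) =
      ∑ j, softmax a j * b j - Real.log (∑ j, Real.exp (b j)) := by
  simp only [log_softmax, mul_sub, sum_sub_distrib, ← sum_mul, sum_softmax, one_mul]

theorem klLoss_softmax [Nonempty (Fin C)] (a b : Fin C → ℝ) :
    klLoss (softmax a) (softmax b) =
      ∑ j, softmax a j * (a j - b j) - Real.log (∑ j, Real.exp (a j))
        + Real.log (∑ j, Real.exp (b j)) := by
  have hlog : ∀ j, Real.log (softmax a j / softmax b j) =
      (a j - b j) - Real.log (∑ k, Real.exp (a k)) + Real.log (∑ k, Real.exp (b k)) := by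
    intro j
    rw [Real.log_div (softmax_pos a j).ne' (softmax_pos b j).ne', log_softmax, log_softmax]
    ring
  simp only [klLoss, hlog, mul_add, mul_sub, sum_add_distrib, sum_sub_distrib, ← sum_mul,
    sum_softmax, one_mul]

theorem dklLoss_eq [Nonempty (Fin C)] (a₀ b₀ a b : Fin C → ℝ) :
    dklLoss a₀ b₀ a b =
      (1 / 2) * (∑ j, softmax a₀ j * (a j - b₀ j) ^ 2 - (∑ j, softmax a₀ j * (a j - b₀ j)) ^ 2)
        - (∑ j, softmax a₀ j * b j - Real.log (∑ j, Real.exp (b j))) := by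
  rw [dklLoss, sum_mul_mul_sq_sub_sub _ _ _ (sum_softmax a₀), sum_softmax_mul_log_softmax]
  ring

theorem hasDerivAt_sum_exp_update (a : Fin C → ℝ) (i : Fin C) :
    HasDerivAt (fun t => ∑ j, Real.exp (update a i t j)) (Real.exp (a i)) (a i) :=
  hasDerivAt_sum_apply_update (fun _ => Real.exp) a i (Real.hasDerivAt_exp _)

theorem hasDerivAt_log_sum_exp_update (a : Fin C → ℝ) (i : Fin C) :
    HasDerivAt (fun t => Real.log (∑ j, Real.exp (update a i t j))) (softmax a i) (a i) := by
  have : Nonempty (Fin C) := ⟨i⟩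
  have h := (hasDerivAt_sum_exp_update a i).log (by simpa using (sum_exp_pos a).ne')
  simpa only [update_eq_self, softmax] using h

end Softmax

section Gradients

variable {C : ℕ} (a₀ b₀ : Fin C → ℝ) (i : Fin C)

theorem hasDerivAt_klLoss_update_left :
    HasDerivAt (fun t => klLoss (softmax (update a₀ i t)) (softmax b₀))
      (softmax a₀ i * ((a₀ i - b₀ i) - ∑ k, softmax a₀ k * (a₀ k - b₀ k))) (a₀ i) := by
  have : Nonempty (Fin C) := ⟨i⟩
  have hN : HasDerivAt (fun t => ∑ j, Real.exp (update a₀ i t j) * (update a₀ i t j - b₀ j))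
      (Real.exp (a₀ i) * (a₀ i - b₀ i) + Real.exp (a₀ i) * 1) (a₀ i) :=
    hasDerivAt_sum_apply_update (fun j x => Real.exp x * (x - b₀ j)) a₀ i
      ((Real.hasDerivAt_exp _).mul ((hasDerivAt_id _).sub_const _))
  have hZ := hasDerivAt_sum_exp_update a₀ i
  have hquot := hN.div hZ (by simpa using (sum_exp_pos a₀).ne')
  have h := (hquot.sub (hasDerivAt_log_sum_exp_update a₀ i)).add_const
    (Real.log (∑ j, Real.exp (b₀ j)))
  simp only [klLoss_softmax, sum_softmax_mul]
  refine h.congr_deriv ?_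
  simp only [update_eq_self, softmax]
  field_simp
  ring

theorem hasDerivAt_klLoss_update_right :
    HasDerivAt (fun t => klLoss (softmax a₀) (softmax (update b₀ i t)))
      (softmax b₀ i - softmax a₀ i) (b₀ i) := by
  have : Nonempty (Fin C) := ⟨i⟩
  have hcross : HasDerivAt (fun t => ∑ j, softmax a₀ j * (a₀ j - update b₀ i t j))
      (softmax a₀ i * (0 - 1)) (b₀ i) :=
    hasDerivAt_sum_apply_update (fun j x => softmax a₀ j * (a₀ j - x)) b₀ i
      (((hasDerivAt_const _ _).sub (hasDerivAt_id _)).const_mul _)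
  have h := (hcross.sub_const (Real.log (∑ j, Real.exp (a₀ j)))).add
    (hasDerivAt_log_sum_exp_update b₀ i)
  simp only [klLoss_softmax]
  refine h.congr_deriv ?_
  ring

theorem hasDerivAt_dklLoss_update_left :
    HasDerivAt (fun t => dklLoss a₀ b₀ (update a₀ i t) b₀)
      (softmax a₀ i * ((a₀ i - b₀ i) - ∑ k, softmax a₀ k * (a₀ k - b₀ k))) (a₀ i) := by
  have : Nonempty (Fin C) := ⟨i⟩
  have hsq : HasDerivAt (fun t => ∑ j, softmax a₀ j * (update a₀ i t j - b₀ j) ^ 2)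
      (softmax a₀ i * (2 * (a₀ i - b₀ i) ^ 1 * 1)) (a₀ i) :=
    hasDerivAt_sum_apply_update (fun j x => softmax a₀ j * (x - b₀ j) ^ 2) a₀ i
      ((((hasDerivAt_id _).sub_const _).pow 2).const_mul _)
  have hmean : HasDerivAt (fun t => ∑ j, softmax a₀ j * (update a₀ i t j - b₀ j))
      (softmax a₀ i * 1) (a₀ i) :=
    hasDerivAt_sum_apply_update (fun j x => softmax a₀ j * (x - b₀ j)) a₀ i
      (((hasDerivAt_id _).sub_const _).const_mul _)
  have h := ((hsq.sub (hmean.pow 2)).const_mul (1 / 2 : ℝ)).sub_const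
    (∑ j, softmax a₀ j * b₀ j - Real.log (∑ j, Real.exp (b₀ j)))
  simp only [dklLoss_eq]
  refine h.congr_deriv ?_
  simp only [update_eq_self]
  ring

theorem hasDerivAt_dklLoss_update_right :
    HasDerivAt (fun t => dklLoss a₀ b₀ a₀ (update b₀ i t))
      (softmax b₀ i - softmax a₀ i) (b₀ i) := by
  have : Nonempty (Fin C) := ⟨i⟩
  have hcross : HasDerivAt (fun t => ∑ j, softmax a₀ j * update b₀ i t j)
      (softmax a₀ i * 1) (b₀ i) :=
    hasDerivAt_sum_apply_update (fun j x => softmax a₀ j * x) b₀ i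
      ((hasDerivAt_id _).const_mul _)
  have h := (hcross.sub (hasDerivAt_log_sum_exp_update b₀ i)).const_sub
    ((1 / 2) * (∑ j, softmax a₀ j * (a₀ j - b₀ j) ^ 2 - (∑ j, softmax a₀ j * (a₀ j - b₀ j)) ^ 2))
  simp only [dklLoss_eq]
  refine h.congr_deriv ?_
  ring

end Gradients

theorem dkl_eq_kl_gradients_general (C : ℕ) (a₀ b₀ : Fin C → ℝ) :
    ∀ i : Fin C,
      (∃ d : ℝ,
        HasDerivAt (fun t : ℝ => dklLoss a₀ b₀ (Function.update a₀ i t) b₀) d (a₀ i) ∧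
        HasDerivAt (fun t : ℝ =>
          klLoss (softmax (Function.update a₀ i t)) (softmax b₀)) d (a₀ i)) ∧
      (∃ d : ℝ,
        HasDerivAt (fun t : ℝ => dklLoss a₀ b₀ a₀ (Function.update b₀ i t)) d (b₀ i) ∧
        HasDerivAt (fun t : ℝ =>
          klLoss (softmax a₀) (softmax (Function.update b₀ i t))) d (b₀ i)) := fun i =>
  ⟨⟨_, hasDerivAt_dklLoss_update_left a₀ b₀ i, hasDerivAt_klLoss_update_left a₀ b₀ i⟩,
    ⟨_, hasDerivAt_dklLoss_update_right a₀ b₀ i, hasDerivAt_klLoss_update_right a₀ b₀ i⟩⟩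

/-- The DKL loss with α = β = 1 produces exactly the same gradients as the KL
loss, in both arguments, at every point. -/
theorem dkl_eq_kl_gradients (C : ℕ) (hC : 1 ≤ C) (a₀ b₀ : Fin C → ℝ) :
    ∀ i : Fin C,
      (∃ d : ℝ,
        HasDerivAt (fun t : ℝ => dklLoss a₀ b₀ (Function.update a₀ i t) b₀) d (a₀ i) ∧
        HasDerivAt (fun t : ℝ =>
          klLoss (softmax (Function.update a₀ i t)) (softmax b₀)) d (a₀ i)) ∧
      (∃ d : ℝ,
        HasDerivAt (fun t : ℝ => dklLoss a₀ b₀ a₀ (Function.update b₀ i t)) d (b₀ i) ∧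
        HasDerivAt (fun t : ℝ =>
          klLoss (softmax a₀) (softmax (Function.update b₀ i t))) d (b₀ i)) :=
  dkl_eq_kl_gradients_general C a₀ b₀
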